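/- Let c be an admissible coefficient function satisfying (Cubic values), and assume a_1 ≥ 2. Let γ ∈ ℤ^{μ_A−2} be non-negative with |γ| = 3 and γ − e_{i,j} ≥ 0 for some (i,j) with a_i ≥ 3 and j ≥ 2. Then c(γ,1) = 0. -/

import Mathlib

/- Common framework: Frobenius manifolds for orbifold projective lines ℙ¹_A,
   following Ishibashi–Shiraishi–Takahashi. -/

namespace FrobeniusUniqueness

/-- A point index `(i, j)` labelling a flat coordinate `t_{i,j}`. -/
abbrev Pt : Type := Fin 3 × ℕ

/-- A non-negative element of `ℤ^{μ_A − 2}`: an exponent vector `α` with `α_{i,j} ∈ ℕ`. -/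
abbrev Expv : Type := Pt →₀ ℕ

/-- The standard basis vector `e_{i,j}`. -/
noncomputable def e (i : Fin 3) (j : ℕ) : Expv := Finsupp.single (i, j) 1

/-- The length `|α|` of an exponent vector. -/
def len (α : Expv) : ℕ := α.sum fun _ n => n

/-- A point index `(i,j)` is valid if `1 ≤ j ≤ a_i − 1`. -/
def ValidPt (A : Fin 3 → ℕ) (p : Pt) : Prop := 1 ≤ p.2 ∧ p.2 ≤ A p.1 - 1

/-- An exponent vector lies in `ℤ^{μ_A − 2}` iff it is supported on valid indices. -/
def Valid (A : Fin 3 → ℕ) (α : Expv) : Prop := ∀ p ∈ α.support, ValidPt A p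

/-- The combinatorial factor `s_{a,b,c}`. -/
def sFactor (a b c : ℕ) : ℂ :=
  if a = b ∧ b = c then 6
  else if a ≠ b ∧ b ≠ c ∧ a ≠ c then 1
  else 2

/-- The index type for the flat coordinates `t_1`, `t_{i,j}`, `t_{μ_A}`. -/
inductive Idx : Type where
  | one : Idx
  | pt : Fin 3 → ℕ → Idx
  | mu : Idx
deriving DecidableEq

/-- Validity of a flat coordinate index. -/
def ValidIdx (A : Fin 3 → ℕ) : Idx → Prop
  | .one => True
  | .pt i j => ValidPt A (i, j)
  | .mu => True

/-- The metric `η` in the frame `∂_1, ∂_{i,j}, ∂_{μ_A}`. -/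
noncomputable def eta (A : Fin 3 → ℕ) : Idx → Idx → ℂ
  | .one, .mu => 1
  | .mu, .one => 1
  | .pt i j, .pt i' j' =>
      if i = i' ∧ j + j' = A i ∧ 1 ≤ j ∧ j ≤ A i - 1 then (A i : ℂ)⁻¹ else 0
  | _, _ => 0

/-- The point indices occurring in an `Idx`. -/
def ptsOf : Idx → List Pt
  | .pt i j => [(i, j)]
  | _ => []

/-- The number of occurrences of `μ_A` in an `Idx`. -/
def muCount : Idx → ℕ
  | .mu => 1
  | _ => 0

/-- The factor produced when the monomial `t^{β + Σ_{p ∈ ps} e_p}` is differentiated by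
`∏_{p ∈ ps} ∂_p`, leaving the monomial `t^β`. -/
noncomputable def dfac (β : Expv) : List Pt → ℕ
  | [] => 1
  | p :: ps =>
      ((β + ((ps.map fun q => (Finsupp.single q 1 : Expv)).sum) + Finsupp.single p 1 : Expv) p)
        * dfac β ps

/-- `der A c a b d β m` is the coefficient of `t^β · e^{m·t_{μ_A}}` in `∂_a ∂_b ∂_d F`, where
`F = (1/2)t_1²t_{μ_A} + (1/2)t_1·Σ_{i,j}(1/a_i)t_{i,j}t_{i,a_i−j} + Σ_{α,m} c(α,m)t^α e^{m t_{μ_A}}`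
is the potential of the coefficient function `c`.  In particular `∂_1∂_a∂_b F = η(∂_a,∂_b)`. -/
noncomputable def der (A : Fin 3 → ℕ) (c : Expv → ℕ → ℂ) (a b d : Idx) (β : Expv) (m : ℕ) : ℂ :=
  if a = .one then (if β = 0 ∧ m = 0 then eta A b d else 0)
  else if b = .one then (if β = 0 ∧ m = 0 then eta A a d else 0)
  else if d = .one then (if β = 0 ∧ m = 0 then eta A a b else 0)
  else
    (m : ℂ) ^ (muCount a + muCount b + muCount d) *
      (dfac β (ptsOf a ++ ptsOf b ++ ptsOf d) : ℂ) *
      c (β + (((ptsOf a ++ ptsOf b ++ ptsOf d).map fun q => (Finsupp.single q 1 : Expv)).sum)) m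

/-- The coefficient of `t^β · e^{m·t_{μ_A}}` in
`Σ_{σ,τ} ∂_a∂_b∂_σF · η^{στ} · ∂_τ∂_d∂_e F`, where `(η^{στ})` is the inverse matrix of
`(η_{στ})` (so the only nonzero entries are `η^{1,μ_A} = η^{μ_A,1} = 1` and
`η^{(i,j),(i,a_i−j)} = a_i`). -/
noncomputable def quadTerm (A : Fin 3 → ℕ) (c : Expv → ℕ → ℂ) (a b d e' : Idx)
    (β : Expv) (m : ℕ) : ℂ :=
  ∑ x ∈ Finset.HasAntidiagonal.antidiagonal β, ∑ y ∈ Finset.HasAntidiagonal.antidiagonal m,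
    (der A c a b .one x.1 y.1 * der A c .mu d e' x.2 y.2
     + der A c a b .mu x.1 y.1 * der A c .one d e' x.2 y.2
     + ∑ i : Fin 3, ∑ j ∈ Finset.Icc 1 (A i - 1),
         (A i : ℂ) * der A c a b (.pt i j) x.1 y.1 * der A c (.pt i (A i - j)) d e' x.2 y.2)

/-- `χ_A = 1/a_1 + 1/a_2 + 1/a_3 − 1`. -/
noncomputable def chi (A : Fin 3 → ℕ) : ℚ := (A 0 : ℚ)⁻¹ + (A 1 : ℚ)⁻¹ + (A 2 : ℚ)⁻¹ - 1

/-- The degree of the monomial `t^α`: `Σ_{i,j} α_{i,j}·(a_i − j)/a_i`. -/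
noncomputable def deg (A : Fin 3 → ℕ) (α : Expv) : ℚ :=
  α.sum fun p n => (n : ℚ) * (((A p.1 : ℚ) - (p.2 : ℚ)) / (A p.1 : ℚ))

/-- A coefficient function is admissible if it satisfies (Homogeneity) and the WDVV
equations (coefficientwise, in the variables `t_{i,j}` and `e^{t_{μ_A}}`). -/
structure IsAdmissible (A : Fin 3 → ℕ) (c : Expv → ℕ → ℂ) : Prop where
  homog : ∀ α : Expv, Valid A α → ∀ m : ℕ, c α m ≠ 0 → deg A α + (m : ℚ) * chi A = 2
  wdvv : ∀ a b d e' : Idx, ValidIdx A a → ValidIdx A b → ValidIdx A d → ValidIdx A e' →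
      ∀ β : Expv, Valid A β → ∀ m : ℕ,
        quadTerm A c a b d e' β m = quadTerm A c a d b e' β m

/-- (Cubic values). -/
def CubicValues (A : Fin 3 → ℕ) (c : Expv → ℕ → ℂ) : Prop :=
  (∀ (i₁ i₂ i₃ : Fin 3) (j₁ j₂ j₃ : ℕ),
      ValidPt A (i₁, j₁) → ValidPt A (i₂, j₂) → ValidPt A (i₃, j₃) →
      ¬(i₁ = i₂ ∧ i₂ = i₃) → c (e i₁ j₁ + e i₂ j₂ + e i₃ j₃) 0 = 0) ∧
  (∀ (i : Fin 3) (j₁ j₂ j₃ : ℕ),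
      ValidPt A (i, j₁) → ValidPt A (i, j₂) → ValidPt A (i, j₃) →
      sFactor j₁ j₂ j₃ * c (e i j₁ + e i j₂ + e i j₃) 0 =
        if j₁ + j₂ + j₃ = A i then (A i : ℂ)⁻¹ else 0)

/-- (Normalization). -/
def Normalization (A : Fin 3 → ℕ) (c : Expv → ℕ → ℂ) : Prop :=
  (2 ≤ A 0 → c (e 0 1 + e 1 1 + e 2 1) 1 = 1) ∧
  (A 0 = 1 → A 0 < A 1 → c (e 1 1 + e 2 1) 1 = 1) ∧
  (A 0 = 1 → A 1 = 1 → A 1 < A 2 → c (e 2 1) 1 = 1) ∧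
  (A 0 = 1 → A 1 = 1 → A 2 = 1 → c 0 1 = 1)

/-- (Separation). -/
def Separation (A : Fin 3 → ℕ) (c : Expv → ℕ → ℂ) : Prop :=
  ∀ γ : Expv, Valid A γ →
    ∀ (i₁ i₂ : Fin 3) (j₁ j₂ : ℕ), i₁ ≠ i₂ → ValidPt A (i₁, j₁) → ValidPt A (i₂, j₂) →
      e i₁ j₁ + e i₂ j₂ ≤ γ → c γ 0 = 0

/-- The automorphism of `ℤ^{μ_A−2}` exchanging `e_{i₁,j}` and `e_{i₂,j}` for all `j`. -/
def swapExp (i₁ i₂ : Fin 3) (α : Expv) : Expv :=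
  Finsupp.equivMapDomain ((Equiv.swap i₁ i₂).prodCongr (Equiv.refl ℕ)) α

/-- (Symmetry). -/
def Symmetry (A : Fin 3 → ℕ) (c : Expv → ℕ → ℂ) : Prop :=
  ∀ i₁ i₂ : Fin 3, A i₁ = A i₂ → ∀ α : Expv, Valid A α → ∀ m : ℕ,
    c (swapExp i₁ i₂ α) m = c α m

/-! The WDVV equation for `(∂_μ, ∂_μ, ∂_{i,1}, ∂_{i,j-1})` at the monomial `t^{γ - e_{i,j}} e^{t_μ}`
has a vanishing right-hand side, since every term contains a factor `∂_μ ∂_{i,1} ∂_· F` or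
`∂_· ∂_μ ∂_{i,j-1} F` at `e^{0 · t_μ}`. On the left-hand side, homogeneity kills every
coefficient `c(α, 1)` with `|α| ≤ 2`, and (Cubic values) kills every cubic coefficient except
`c(e_{i,a_i-j} + e_{i,1} + e_{i,j-1}, 0) ≠ 0`; what remains is a nonzero multiple of `c(γ, 1)`. -/

lemma len_eq_degree (α : Expv) : len α = α.degree := rfl

lemma len_add (α β : Expv) : len (α + β) = len α + len β := by
  simp only [len_eq_degree, map_add]

lemma len_single (p : Pt) (n : ℕ) : len (Finsupp.single p n) = n := by
  rw [len_eq_degree, Finsupp.degree_single]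

lemma len_pos {α : Expv} (h : α ≠ 0) : 0 < len α := by
  rw [len_eq_degree, Nat.pos_iff_ne_zero, Ne, Finsupp.degree_eq_zero_iff]
  exact h

section Valid

variable {A : Fin 3 → ℕ}

lemma validPt_iff {i : Fin 3} {j : ℕ} : ValidPt A (i, j) ↔ 1 ≤ j ∧ j ≤ A i - 1 := Iff.rfl

lemma Valid.add {α β : Expv} (hα : Valid A α) (hβ : Valid A β) : Valid A (α + β) := by
  intro p hp
  rcases Finset.mem_union.mp (Finsupp.support_add hp) with h | h
  exacts [hα p h, hβ p h]

lemma Valid.mono {α β : Expv} (h : α ≤ β) (hβ : Valid A β) : Valid A α := fun p hp =>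
  hβ p (Finsupp.support_mono h hp)

lemma valid_e {i : Fin 3} {j : ℕ} (h : ValidPt A (i, j)) : Valid A (e i j) := by
  intro q hq
  rwa [Finset.mem_singleton.mp (Finsupp.support_single_subset hq)]

lemma validPt_sub {i : Fin 3} {l : ℕ} (hl : ValidPt A (i, l)) : ValidPt A (i, A i - l) := by
  rw [validPt_iff] at hl ⊢
  omega

end Valid

lemma sFactor_ne_zero (a b c : ℕ) : sFactor a b c ≠ 0 := by
  unfold sFactor
  split_ifs <;> norm_num

lemma dfac_pos (β : Expv) (ps : List Pt) : 0 < dfac β ps := by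
  induction ps with
  | nil => simp [dfac]
  | cons p ps ih =>
    refine Nat.mul_pos ?_ ih
    simp [Finsupp.add_apply]

section Derivatives

variable (A : Fin 3 → ℕ) (c : Expv → ℕ → ℂ)

lemma der_one_left (b d : Idx) (x : Expv) (m : ℕ) :
    der A c .one b d x m = if x = 0 ∧ m = 0 then eta A b d else 0 := by
  rw [der, if_pos rfl]

lemma der_one_right {a b : Idx} (ha : a ≠ .one) (hb : b ≠ .one) (x : Expv) (m : ℕ) :
    der A c a b .one x m = if x = 0 ∧ m = 0 then eta A a b else 0 := by
  rw [der, if_neg ha, if_neg hb, if_pos rfl]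

lemma der_mu_mu_one (x : Expv) (m : ℕ) : der A c .mu .mu .one x m = 0 := by
  rw [der_one_right A c Idx.noConfusion Idx.noConfusion]
  exact ite_self 0

lemma der_mu_mu_pt (k : Fin 3) (l : ℕ) (x : Expv) (m : ℕ) :
    der A c .mu .mu (.pt k l) x m
      = (m : ℂ) ^ 2 * dfac x [(k, l)] * c (x + e k l) m := by
  simp [der, ptsOf, muCount, e]

lemma der_pt_pt_pt (k i₁ i₂ : Fin 3) (v u₁ u₂ : ℕ) (x : Expv) (m : ℕ) :
    der A c (.pt k v) (.pt i₁ u₁) (.pt i₂ u₂) x m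
      = dfac x [(k, v), (i₁, u₁), (i₂, u₂)] *
          c (x + (e k v + e i₁ u₁ + e i₂ u₂)) m := by
  simp [der, ptsOf, muCount, add_assoc, e]

lemma der_mu_pt_pt_zero (i k : Fin 3) (u l : ℕ) (x : Expv) :
    der A c .mu (.pt i u) (.pt k l) x 0 = 0 := by
  simp [der, ptsOf, muCount]

lemma der_pt_mu_pt_zero (i k : Fin 3) (u l : ℕ) (x : Expv) :
    der A c (.pt k l) .mu (.pt i u) x 0 = 0 := by
  simp [der, ptsOf, muCount]

lemma quadTerm_mu_pt_mu_pt_one (i i' : Fin 3) (u u' : ℕ) (β : Expv) :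
    quadTerm A c .mu (.pt i u) .mu (.pt i' u') β 1 = 0 := by
  refine Finset.sum_eq_zero fun x _ => ?_
  rw [Finset.Nat.sum_antidiagonal_succ, Finset.Nat.antidiagonal_zero, Finset.sum_singleton]
  simp [der_one_left, der_one_right, eta, der_mu_pt_pt_zero, der_pt_mu_pt_zero]

/-- Only `y = (1, 0)` contributes: `∂_μ∂_μ∂_σ F` carries the factor `m²`, and the `η`-terms
vanish as `η(∂_μ, ∂_μ) = η(∂_d, ∂_{e'}) = 0`. -/
lemma quadTerm_mu_mu_pt_pt_one {i i' : Fin 3} {u u' : ℕ} (hη : eta A (.pt i u) (.pt i' u') = 0)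
    (β : Expv) :
    quadTerm A c .mu .mu (.pt i u) (.pt i' u') β 1 =
      ∑ x ∈ Finset.HasAntidiagonal.antidiagonal β, ∑ k : Fin 3, ∑ l ∈ Finset.Icc 1 (A k - 1),
        (A k : ℂ) * der A c .mu .mu (.pt k l) x.1 1 *
          der A c (.pt k (A k - l)) (.pt i u) (.pt i' u') x.2 0 := by
  refine Finset.sum_congr rfl fun x _ => ?_
  rw [Finset.Nat.sum_antidiagonal_succ, Finset.Nat.antidiagonal_zero, Finset.sum_singleton]
  simp [der_mu_mu_one, der_one_left, hη, der_mu_mu_pt]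

end Derivatives

section Homogeneity

variable {A : Fin 3 → ℕ}

lemma deg_le_len_mul {w : ℚ} (hw : ∀ p, ValidPt A p → ((A p.1 : ℚ) - p.2) / A p.1 ≤ w)
    {α : Expv} (hα : Valid A α) : deg A α ≤ len α * w := by
  rw [deg, len, Finsupp.sum, Finsupp.sum, Nat.cast_sum, Finset.sum_mul]
  exact Finset.sum_le_sum fun p hp => mul_le_mul_of_nonneg_left (hw p (hα p hp)) (by positivity)

lemma apply_le_apply_two (hA01 : A 0 ≤ A 1) (hA12 : A 1 ≤ A 2) (k : Fin 3) : A k ≤ A 2 := by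
  fin_cases k <;> simp <;> omega

lemma weight_le (hA01 : A 0 ≤ A 1) (hA12 : A 1 ≤ A 2) {p : Pt} (hp : ValidPt A p) :
    ((A p.1 : ℚ) - p.2) / A p.1 ≤ 1 - (A 2 : ℚ)⁻¹ := by
  obtain ⟨h1, h2⟩ := hp
  have hk : (A p.1 : ℚ) ≤ A 2 := by exact_mod_cast apply_le_apply_two hA01 hA12 p.1
  have hpos : (0 : ℚ) < A p.1 := by exact_mod_cast (by omega : 0 < A p.1)
  have hl : (1 : ℚ) ≤ p.2 := by exact_mod_cast h1
  have hq : (A p.1 : ℚ) / A 2 ≤ 1 := div_le_one_of_le₀ hk (by positivity)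
  rw [div_le_iff₀ hpos, sub_mul, inv_mul_eq_div]
  linarith

lemma chi_le (hA0 : 2 ≤ A 0) (hA01 : A 0 ≤ A 1) : chi A ≤ (A 2 : ℚ)⁻¹ := by
  have h0 : (A 0 : ℚ)⁻¹ ≤ 2⁻¹ := inv_anti₀ two_pos (by exact_mod_cast hA0)
  have h1 : (A 1 : ℚ)⁻¹ ≤ 2⁻¹ := inv_anti₀ two_pos (by exact_mod_cast hA0.trans hA01)
  rw [chi]
  linarith

/-- The degree of `t^α` is at most `|α| (1 - 1/a_3)` and `χ_A ≤ 1/a_3`, so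
`deg t^α + χ_A ≤ 2 - 1/a_3 < 2` once `|α| ≤ 2`. -/
lemma coeff_one_eq_zero_of_len_le_two (hA0 : 2 ≤ A 0) (hA01 : A 0 ≤ A 1) (hA12 : A 1 ≤ A 2)
    {c : Expv → ℕ → ℂ} (hadm : IsAdmissible A c)
    {α : Expv} (hα : Valid A α) (hlen : len α ≤ 2) : c α 1 = 0 := by
  by_contra hc
  have hhom := hadm.homog α hα 1 hc
  have hdeg := deg_le_len_mul (fun _ => weight_le hA01 hA12) hα
  have hchi := chi_le hA0 hA01
  have hA2 : (2 : ℚ) ≤ A 2 := by exact_mod_cast hA0.trans (hA01.trans hA12)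
  have hinv : (0 : ℚ) < (A 2 : ℚ)⁻¹ ∧ (A 2 : ℚ)⁻¹ ≤ 1 :=
    ⟨by positivity, inv_le_one_of_one_le₀ (by linarith)⟩
  have hlen' : (len α : ℚ) ≤ 2 := by exact_mod_cast hlen
  push_cast at hhom
  nlinarith

end Homogeneity

section Cubic

variable {A : Fin 3 → ℕ} {c : Expv → ℕ → ℂ}

lemma CubicValues.coeff_eq_zero (hcub : CubicValues A c) {k i : Fin 3} {v u₁ u₂ : ℕ}
    (hv : ValidPt A (k, v)) (hu₁ : ValidPt A (i, u₁)) (hu₂ : ValidPt A (i, u₂))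
    (h : ¬(k = i ∧ v + u₁ + u₂ = A i)) : c (e k v + e i u₁ + e i u₂) 0 = 0 := by
  by_cases hki : k = i
  · subst hki
    have hs := hcub.2 k v u₁ u₂ hv hu₁ hu₂
    rw [if_neg fun hsum => h ⟨rfl, hsum⟩] at hs
    exact (mul_eq_zero.mp hs).resolve_left (sFactor_ne_zero _ _ _)
  · exact hcub.1 k i i v u₁ u₂ hv hu₁ hu₂ fun h => hki h.1

lemma CubicValues.coeff_ne_zero (hcub : CubicValues A c) {i : Fin 3} {j₁ j₂ j₃ : ℕ}
    (h₁ : ValidPt A (i, j₁)) (h₂ : ValidPt A (i, j₂)) (h₃ : ValidPt A (i, j₃))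
    (hsum : j₁ + j₂ + j₃ = A i) : c (e i j₁ + e i j₂ + e i j₃) 0 ≠ 0 := by
  have hs := hcub.2 i j₁ j₂ j₃ h₁ h₂ h₃
  rw [if_pos hsum] at hs
  have hA : (A i : ℂ) ≠ 0 := Nat.cast_ne_zero.mpr (by rw [validPt_iff] at h₁; omega)
  intro h0
  rw [h0, mul_zero] at hs
  exact inv_ne_zero hA hs.symm

end Cubic

section WDVV

variable {A : Fin 3 → ℕ} {c : Expv → ℕ → ℂ}

lemma der_mu_mu_pt_one_eq_zero (hA0 : 2 ≤ A 0) (hA01 : A 0 ≤ A 1) (hA12 : A 1 ≤ A 2)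
    (hadm : IsAdmissible A c) {k : Fin 3} {l : ℕ} (hkl : ValidPt A (k, l)) {x : Expv}
    (hx : Valid A x) (hlen : len x ≤ 1) : der A c .mu .mu (.pt k l) x 1 = 0 := by
  have hlen' : len (x + e k l) ≤ 2 := by rw [len_add, e, len_single]; omega
  rw [der_mu_mu_pt, coeff_one_eq_zero_of_len_le_two hA0 hA01 hA12 hadm
    (hx.add (valid_e hkl)) hlen', mul_zero]

/-- A splitting `β = x₁ + x₂` with `x₂ ≠ 0` has `|x₁| ≤ 1`, so homogeneity kills its terms. -/
lemma quadTerm_mu_mu_pt_pt_one_eq_sum (hA0 : 2 ≤ A 0) (hA01 : A 0 ≤ A 1) (hA12 : A 1 ≤ A 2)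
    (hadm : IsAdmissible A c) {i i' : Fin 3} {u u' : ℕ}
    (hη : eta A (.pt i u) (.pt i' u') = 0) {β : Expv} (hβ : Valid A β) (hlen : len β ≤ 2) :
    quadTerm A c .mu .mu (.pt i u) (.pt i' u') β 1 =
      ∑ k : Fin 3, ∑ l ∈ Finset.Icc 1 (A k - 1),
        (A k : ℂ) * der A c .mu .mu (.pt k l) β 1 *
          der A c (.pt k (A k - l)) (.pt i u) (.pt i' u') 0 0 := by
  rw [quadTerm_mu_mu_pt_pt_one A c hη, Finset.sum_eq_single_of_mem (β, 0)
    (Finset.HasAntidiagonal.mem_antidiagonal.mpr (add_zero β))]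
  intro x hx hne
  have hsum : x.1 + x.2 = β := Finset.HasAntidiagonal.mem_antidiagonal.mp hx
  have hx₂ : x.2 ≠ 0 := fun h0 => hne (Prod.ext (by rw [← hsum, h0, add_zero]) h0)
  have hlen₁ : len x.1 ≤ 1 := by
    have := len_pos hx₂
    have := len_add x.1 x.2
    rw [hsum] at this
    omega
  have hx₁ : Valid A x.1 := hβ.mono (hsum ▸ le_self_add)
  refine Finset.sum_eq_zero fun k _ => Finset.sum_eq_zero fun l hl => ?_
  have hkl : ValidPt A (k, l) := Finset.mem_Icc.mp hl
  rw [der_mu_mu_pt_one_eq_zero hA0 hA01 hA12 hadm hkl hx₁ hlen₁, mul_zero, zero_mul]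

lemma sum_der_cubic_eq (hcub : CubicValues A c) {i : Fin 3} {u : ℕ} (hu : 1 ≤ u)
    (hv : ValidPt A (i, u + 1)) (f : Fin 3 → ℕ → ℂ) :
    ∑ k : Fin 3, ∑ l ∈ Finset.Icc 1 (A k - 1),
        (A k : ℂ) * f k l * der A c (.pt k (A k - l)) (.pt i 1) (.pt i u) 0 0 =
      A i * f i (u + 1) * der A c (.pt i (A i - (u + 1))) (.pt i 1) (.pt i u) 0 0 := by
  have hle : u + 1 ≤ A i - 1 := hv.2
  have h₁ : ValidPt A (i, 1) := validPt_iff.mpr ⟨le_rfl, by omega⟩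
  have hu' : ValidPt A (i, u) := validPt_iff.mpr ⟨hu, by omega⟩
  have hcubic_zero : ∀ k l, l ∈ Finset.Icc 1 (A k - 1) → ¬(k = i ∧ l = u + 1) →
      der A c (.pt k (A k - l)) (.pt i 1) (.pt i u) 0 0 = 0 := by
    intro k l hl hne
    have hkl : ValidPt A (k, l) := Finset.mem_Icc.mp hl
    rw [der_pt_pt_pt, zero_add, hcub.coeff_eq_zero (validPt_sub hkl) h₁ hu', mul_zero]
    rintro ⟨rfl, hsum⟩
    rw [validPt_iff] at hkl
    exact hne ⟨rfl, by omega⟩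
  rw [Fintype.sum_eq_single i fun k hk => Finset.sum_eq_zero fun l hl => by
      rw [hcubic_zero k l hl fun h => hk h.1, mul_zero],
    Finset.sum_eq_single_of_mem (u + 1) (Finset.mem_Icc.mpr ⟨by omega, hle⟩) fun l hl hne => by
      rw [hcubic_zero i l hl fun h => hne h.2, mul_zero]]

end WDVV

theorem degree_one_coefficient_vanishing_general (A : Fin 3 → ℕ) (hA01 : A 0 ≤ A 1) (hA12 : A 1 ≤ A 2)
    (c : Expv → ℕ → ℂ) (hadm : IsAdmissible A c) (hcub : CubicValues A c)
    (ha₁ : 2 ≤ A 0)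
    (γ : Expv) (hγ : Valid A γ) (hlen : len γ = 3)
    (i : Fin 3) (j : ℕ) (hv : ValidPt A (i, j)) (hj : 2 ≤ j)
    (hle : e i j ≤ γ) :
    c γ 1 = 0 := by
  obtain ⟨u, rfl⟩ : ∃ u, j = u + 1 := ⟨j - 1, by omega⟩
  have hji : u + 1 ≤ A i - 1 := hv.2
  have h₁ : ValidPt A (i, 1) := validPt_iff.mpr ⟨le_rfl, by omega⟩
  have hu : ValidPt A (i, u) := validPt_iff.mpr ⟨by omega, by omega⟩
  have hcompl : ValidPt A (i, A i - (u + 1)) := validPt_sub hv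
  obtain ⟨β, rfl⟩ : ∃ β, γ = β + e i (u + 1) := ⟨γ - e i (u + 1), (tsub_add_cancel_of_le hle).symm⟩
  have hβ : Valid A β := hγ.mono le_self_add
  rw [len_add, e, len_single] at hlen
  have hη : eta A (.pt i 1) (.pt i u) = 0 := if_neg fun h => by omega
  have hwdvv := hadm.wdvv .mu .mu (.pt i 1) (.pt i u) trivial trivial h₁ hu β hβ 1
  rw [quadTerm_mu_pt_mu_pt_one, quadTerm_mu_mu_pt_pt_one_eq_sum ha₁ hA01 hA12 hadm hη hβ
    (by omega), sum_der_cubic_eq hcub hu.1 hv, der_mu_mu_pt, der_pt_pt_pt, zero_add] at hwdvv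
  have hA : (A i : ℂ) ≠ 0 := Nat.cast_ne_zero.mpr (by omega)
  have hcubic_ne := hcub.coeff_ne_zero hcompl h₁ hu (by omega)
  simpa [hA, hcubic_ne, (dfac_pos _ _).ne'] using hwdvv

/-- Lemma (Case 1 of Proposition 3.8, for a₁ ≥ 2). -/
theorem degree_one_coefficient_vanishing (A : Fin 3 → ℕ) (hA : ∀ i, 1 ≤ A i) (hA01 : A 0 ≤ A 1) (hA12 : A 1 ≤ A 2)
    (c : Expv → ℕ → ℂ) (hadm : IsAdmissible A c) (hcub : CubicValues A c)
    (ha₁ : 2 ≤ A 0)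
    (γ : Expv) (hγ : Valid A γ) (hlen : len γ = 3)
    (i : Fin 3) (j : ℕ) (hv : ValidPt A (i, j)) (hai : 3 ≤ A i) (hj : 2 ≤ j)
    (hle : e i j ≤ γ) :
    c γ 1 = 0 :=
  degree_one_coefficient_vanishing_general A hA01 hA12 c hadm hcub ha₁ γ hγ hlen i j hv hj hle

end FrobeniusUniqueness
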